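/- Fix an analytic function σ: ℝ → ℝ that is not a polynomial, and let d ≥ 1. Let s_1,…,s_n and ŝ_1,…,ŝ_m be vectors in ℝ^d. If for every a ∈ ℝ^d and b ∈ ℝ one has Σ_{i=1}^n σ(a·s_i + b) = Σ_{i=1}^m σ(a·ŝ_i + b), then n = m and the multisets coincide: {{s_1,…,s_n}} = {{ŝ_1,…,ŝ_m}}. -/

import Mathlib

open scoped BigOperators
open scoped ContDiff

section Aux

open Polynomial in
lemma exists_antideriv (p : Polynomial ℝ) : ∃ P : Polynomial ℝ, P.derivative = p := by
  induction p using Polynomial.induction_on with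
  | C a => exact ⟨C a * X, by simp⟩
  | add p q hp hq =>
      obtain ⟨P, hP⟩ := hp; obtain ⟨Q, hQ⟩ := hq
      exact ⟨P + Q, by simp [hP, hQ]⟩
  | monomial k a _ =>
      refine ⟨C (a / (k + 2)) * X ^ (k + 2), ?_⟩
      rw [derivative_C_mul_X_pow]
      have h1 : a / ((k:ℝ) + 2) * ((k + 2 : ℕ) : ℝ) = a := by
        have : ((k : ℝ) + 2) ≠ 0 := by positivity
        push_cast
        field_simp
      rw [show k + 2 - 1 = k + 1 from rfl, h1]

open Polynomial in
lemma poly_of_iteratedDeriv_zero : ∀ (k : ℕ) (f : ℝ → ℝ), ContDiff ℝ ∞ f →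
    (∀ x, iteratedDeriv k f x = 0) → ∃ p : Polynomial ℝ, ∀ x, f x = p.eval x := by
  intro k
  induction k with
  | zero =>
      intro f _ h0
      exact ⟨0, fun x => by simpa using h0 x⟩
  | succ k ih =>
      intro f hf h0
      have hdf : ContDiff ℝ ∞ (deriv f) := (contDiff_infty_iff_deriv.mp hf).2
      obtain ⟨q, hq⟩ := ih (deriv f) hdf (fun x => by
        have := h0 x; rwa [iteratedDeriv_succ'] at this)
      obtain ⟨P, hP⟩ := exists_antideriv q
      have hfd : Differentiable ℝ f := (contDiff_infty_iff_deriv.mp hf).1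
      have hgd : Differentiable ℝ (fun x => f x - P.eval x) :=
        hfd.sub (Polynomial.differentiable P)
      have hg' : ∀ x, deriv (fun x => f x - P.eval x) x = 0 := by
        intro x
        rw [deriv_fun_sub (hfd x) ((Polynomial.differentiable P) x), Polynomial.deriv, hP, ← hq]
        ring
      refine ⟨P + C (f 0 - P.eval 0), fun x => ?_⟩
      have := is_const_of_deriv_eq_zero hgd hg' x 0
      simp only [eval_add, eval_C]
      linarith [this]

lemma iteratedDeriv_zero_fun (k : ℕ) : iteratedDeriv k (fun _ : ℝ => (0:ℝ)) = fun _ => 0 := by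
  induction k with
  | zero => simp [iteratedDeriv_zero]
  | succ k ih => rw [iteratedDeriv_succ, ih]; funext x; simp

lemma iteratedDeriv_fun_add_aux {f g : ℝ → ℝ} (hf : ContDiff ℝ ∞ f) (hg : ContDiff ℝ ∞ g) (k : ℕ) :
    iteratedDeriv k (fun x => f x + g x) = fun x => iteratedDeriv k f x + iteratedDeriv k g x := by
  funext x
  have hf' : ContDiffOn ℝ k f Set.univ := (hf.of_le (by exact_mod_cast le_top)).contDiffOn
  have hg' : ContDiffOn ℝ k g Set.univ := (hg.of_le (by exact_mod_cast le_top)).contDiffOn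
  have := iteratedDerivWithin_add (Set.mem_univ x) uniqueDiffOn_univ (hf' x (Set.mem_univ x)) (hg' x (Set.mem_univ x))
  simpa [iteratedDerivWithin_univ] using (by exact this : iteratedDerivWithin k (fun x => f x + g x) Set.univ x = iteratedDerivWithin k f Set.univ x + iteratedDerivWithin k g Set.univ x)

lemma iteratedDeriv_fun_sum_aux {ι : Type*} (t : Finset ι) (f : ι → ℝ → ℝ)
    (hf : ∀ i ∈ t, ContDiff ℝ ∞ (f i)) (k : ℕ) :
    iteratedDeriv k (fun x => ∑ i ∈ t, f i x) = fun x => ∑ i ∈ t, iteratedDeriv k (f i) x := by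
  classical
  induction t using Finset.induction_on with
  | empty => simpa using iteratedDeriv_zero_fun k
  | insert _ _ hnot ih =>
      rename_i a t'
      have hfa : ContDiff ℝ ∞ (f a) := hf a (Finset.mem_insert_self a t')
      have hfs : ContDiff ℝ ∞ (fun x => ∑ i ∈ t', f i x) :=
        ContDiff.sum (fun i hi => hf i (Finset.mem_insert_of_mem hi))
      simp only [Finset.sum_insert hnot]
      rw [iteratedDeriv_fun_add_aux hfa hfs, ih (fun i hi => hf i (Finset.mem_insert_of_mem hi))]

lemma iteratedDeriv_affine (σ : ℝ → ℝ) (hσ : ContDiff ℝ ∞ σ) (c b : ℝ) (k : ℕ) :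
    iteratedDeriv k (fun t => σ (c * t + b)) 0 = c ^ k * iteratedDeriv k σ b := by
  have hg : ContDiff ℝ ∞ (fun z : ℝ => σ (z + b)) := hσ.comp (contDiff_id.add contDiff_const)
  have h1 : iteratedDeriv k (fun t => (fun z : ℝ => σ (z + b)) (c * t)) =
      fun t => c ^ k * iteratedDeriv k (fun z : ℝ => σ (z + b)) (c * t) :=
    iteratedDeriv_comp_const_mul (hg.of_le (by exact_mod_cast le_top)) c
  have h2 := iteratedDeriv_comp_add_const k σ b
  have h3 := congrFun h1 0
  rw [h2] at h3
  simpa using h3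

open Polynomial in
lemma psum_multiset_eq {N : ℕ} (f g : Fin N → ℝ)
    (hp : ∀ k : ℕ, ∑ i, f i ^ k = ∑ i, g i ^ k) :
    (Finset.univ.val.map f) = (Finset.univ.val.map g) := by
  have haevalp : ∀ (u : Fin N → ℝ) (k : ℕ),
      MvPolynomial.aeval u (MvPolynomial.psum (Fin N) ℝ k) = ∑ i, u i ^ k := by
    intro u k
    simp [MvPolynomial.psum, map_sum]
  have hes : ∀ k, (Finset.univ.val.map f).esymm k = (Finset.univ.val.map g).esymm k := by
    intro k
    induction k using Nat.strong_induction_on with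
    | _ k ih =>
      rcases Nat.eq_zero_or_pos k with rfl | hk
      · simp [Multiset.esymm]
      · have h1 := congrArg (MvPolynomial.aeval f) (MvPolynomial.mul_esymm_eq_sum (Fin N) ℝ k)
        have h2 := congrArg (MvPolynomial.aeval g) (MvPolynomial.mul_esymm_eq_sum (Fin N) ℝ k)
        simp only [map_mul, map_sum, map_pow, map_neg, map_one, map_natCast,
          MvPolynomial.aeval_esymm_eq_multiset_esymm, haevalp] at h1 h2
        have hsum : ∑ a ∈ (Finset.HasAntidiagonal.antidiagonal k).filter (fun a => a.1 < k),
              (-1:ℝ) ^ a.1 * (Finset.univ.val.map f).esymm a.1 * (∑ i, f i ^ a.2)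
            = ∑ a ∈ (Finset.HasAntidiagonal.antidiagonal k).filter (fun a => a.1 < k),
              (-1:ℝ) ^ a.1 * (Finset.univ.val.map g).esymm a.1 * (∑ i, g i ^ a.2) := by
          refine Finset.sum_congr rfl (fun a ha => ?_)
          rw [ih a.1 (Finset.mem_filter.mp ha).2, hp a.2]
        have hkne : ((k:ℝ)) ≠ 0 := Nat.cast_ne_zero.mpr hk.ne'
        apply mul_left_cancel₀ hkne
        rw [h1, h2, hsum]
  have hcard : Multiset.card (Finset.univ.val.map f) = N := by simp
  have hcard' : Multiset.card (Finset.univ.val.map g) = N := by simp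
  have hprod : ((Finset.univ.val.map f).map (fun r => X + C r)).prod
      = ((Finset.univ.val.map g).map (fun r => X + C r)).prod := by
    rw [Multiset.prod_X_add_C_eq_sum_esymm, Multiset.prod_X_add_C_eq_sum_esymm, hcard, hcard']
    exact Finset.sum_congr rfl (fun j _ => by rw [hes j])
  have hneg : ∀ u : Multiset ℝ, (u.map (fun r => X + C r)).prod
      = ((u.map (fun r => -r)).map (fun a => X - C a)).prod := by
    intro u
    rw [Multiset.map_map]
    exact congrArg Multiset.prod (Multiset.map_congr rfl (fun r _ => by simp))
  rw [hneg, hneg] at hprod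
  have h5 := congrArg Polynomial.roots hprod
  rw [Polynomial.roots_multiset_prod_X_sub_C, Polynomial.roots_multiset_prod_X_sub_C] at h5
  have h6 := congrArg (Multiset.map (fun r : ℝ => -r)) h5
  simpa [Multiset.map_map, Function.comp_def] using h6

lemma multiset_map_inj {α β : Type*} [DecidableEq α] (f : α → β) :
    ∀ (M N : Multiset α), (∀ x ∈ M, ∀ y ∈ N, f x = f y → x = y) →
      M.map f = N.map f → M = N := by
  intro M
  induction M using Multiset.induction_on with
  | empty =>
      intro N _ hmap
      simp only [Multiset.map_zero] at hmap
      have := congrArg Multiset.card hmap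
      simp at this
      exact (Multiset.card_eq_zero.mp (by simp [← this])).symm
  | cons a M ih =>
      intro N hinj hmap
      have hmem : f a ∈ N.map f := by
        rw [← hmap]; exact Multiset.mem_map_of_mem f (Multiset.mem_cons_self a M)
      obtain ⟨b, hbN, hfb⟩ := Multiset.mem_map.mp hmem
      have hab : a = b := hinj a (Multiset.mem_cons_self a M) b hbN hfb.symm
      subst hab
      have hN : N = a ::ₘ N.erase a := (Multiset.cons_erase hbN).symm
      rw [hN, Multiset.map_cons, Multiset.map_cons] at hmap
      have hmap' : M.map f = (N.erase a).map f := (Multiset.cons_inj_right _).mp hmap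
      have hM : M = N.erase a := by
        refine ih (N.erase a) (fun x hx y hy => ?_) hmap'
        exact hinj x (Multiset.mem_cons_of_mem hx) y (Multiset.mem_of_mem_erase hy)
      rw [hN, hM]

end Aux

/-- Proposition 3.2 of Amir et al.: sums of a fixed analytic non-polynomial activation
applied to affine functionals separate multisets of vectors. -/
theorem analytic_sum_separates_multisets
    {d n m : ℕ} (hd : 1 ≤ d)
    (σ : ℝ → ℝ) (hσa : ∀ x : ℝ, AnalyticAt ℝ σ x)
    (hσp : ¬ ∃ p : Polynomial ℝ, ∀ x : ℝ, σ x = p.eval x)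
    (s : Fin n → Fin d → ℝ) (sh : Fin m → Fin d → ℝ)
    (h : ∀ (a : Fin d → ℝ) (b : ℝ),
      ∑ i, σ ((∑ l, a l * s i l) + b) = ∑ i, σ ((∑ l, a l * sh i l) + b)) :
    n = m ∧ Finset.univ.val.map s = Finset.univ.val.map sh := by
  classical
  have hσ : ContDiff ℝ ∞ σ := contDiff_iff_contDiffAt.mpr fun x => (hσa x).contDiffAt
  have hder : ∀ k : ℕ, ∃ b, iteratedDeriv k σ b ≠ 0 := by
    intro k
    by_contra hc
    push_neg at hc
    exact hσp (poly_of_iteratedDeriv_zero k σ hσ hc)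
  -- power sums of the projections agree
  have key : ∀ (k : ℕ) (a : Fin d → ℝ),
      ∑ i, (∑ l, a l * s i l) ^ k = ∑ i, (∑ l, a l * sh i l) ^ k := by
    intro k a
    obtain ⟨b, hb⟩ := hder k
    set c : Fin n → ℝ := fun i => ∑ l, a l * s i l with hc
    set ch : Fin m → ℝ := fun i => ∑ l, a l * sh i l with hch
    have hfun : (fun t => ∑ i, σ (c i * t + b)) = (fun t => ∑ i, σ (ch i * t + b)) := by
      funext t
      have ht := h (fun l => t * a l) b
      have e1 : ∀ i, ∑ l, (t * a l) * s i l = c i * t := by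
        intro i
        rw [mul_comm, hc, Finset.mul_sum]
        exact Finset.sum_congr rfl (fun l _ => by ring)
      have e2 : ∀ i, ∑ l, (t * a l) * sh i l = ch i * t := by
        intro i
        rw [mul_comm, hch, Finset.mul_sum]
        exact Finset.sum_congr rfl (fun l _ => by ring)
      simp only [e1, e2] at ht
      exact ht
    have hcd : ∀ (e : ℝ), ContDiff ℝ ∞ (fun t => σ (e * t + b)) :=
      fun e => hσ.comp ((contDiff_const.mul contDiff_id).add contDiff_const)
    have hL := iteratedDeriv_fun_sum_aux Finset.univ (fun i t => σ (c i * t + b))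
      (fun i _ => hcd (c i)) k
    have hR := iteratedDeriv_fun_sum_aux Finset.univ (fun i t => σ (ch i * t + b))
      (fun i _ => hcd (ch i)) k
    have hEq := congrFun (congrArg (iteratedDeriv k) hfun) 0
    rw [hL, hR] at hEq
    simp only [iteratedDeriv_affine σ hσ _ b k] at hEq
    rw [← Finset.sum_mul, ← Finset.sum_mul] at hEq
    exact mul_right_cancel₀ hb hEq
  -- cardinalities agree
  have hnm : n = m := by
    have h0 := key 0 0
    simp only [pow_zero, Finset.sum_const, Finset.card_univ, Fintype.card_fin, nsmul_eq_mul,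
      mul_one] at h0
    exact_mod_cast h0
  subst hnm
  refine ⟨rfl, ?_⟩
  -- projected multisets agree for every a
  have hproj : ∀ a : Fin d → ℝ,
      (Finset.univ.val.map fun i => ∑ l, a l * s i l)
        = (Finset.univ.val.map fun i => ∑ l, a l * sh i l) :=
    fun a => psum_multiset_eq _ _ (fun k => key k a)
  -- find a separating functional
  have hnd : Nonempty (Fin d) := ⟨⟨0, hd⟩⟩
  set W : Finset (Fin d → ℝ) := Finset.image s Finset.univ ∪ Finset.image sh Finset.univ with hW
  set φ : (Fin d → ℝ) → ((Fin d → ℝ) →ₗ[ℝ] ℝ) :=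
    fun w => ∑ l, w l • LinearMap.proj l with hφdef
  have hφ : ∀ w a : Fin d → ℝ, φ w a = ∑ l, a l * w l := by
    intro w a
    simp [hφdef, LinearMap.proj_apply, smul_eq_mul, mul_comm]
  have hφne : ∀ w : Fin d → ℝ, w ≠ 0 → LinearMap.ker (φ w) ≠ ⊤ := by
    intro w hw
    rw [Ne, LinearMap.ker_eq_top]
    intro h0
    obtain ⟨l0, hl0⟩ := Function.ne_iff.mp hw
    have h1 := congrArg (fun ψ : (Fin d → ℝ) →ₗ[ℝ] ℝ => ψ (Pi.single l0 1)) h0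
    simp only [hφ, LinearMap.zero_apply] at h1
    rw [Finset.sum_eq_single l0 (fun l _ hl => by simp [Pi.single_apply, hl])
      (fun hl => absurd (Finset.mem_univ l0) hl)] at h1
    simp at h1
    exact hl0 (by simpa using h1)
  set w0 : Fin d → ℝ := Pi.single (⟨0, hd⟩ : Fin d) 1 with hw0def
  have hw0 : w0 ≠ 0 := by
    intro hcon
    have := congrFun hcon ⟨0, hd⟩
    simp [hw0def] at this
  set K : (↥W × ↥W) → Subspace ℝ (Fin d → ℝ) :=
    fun p => if (p.1 : Fin d → ℝ) = (p.2 : Fin d → ℝ) then LinearMap.ker (φ w0)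
      else LinearMap.ker (φ ((p.1 : Fin d → ℝ) - (p.2 : Fin d → ℝ))) with hK
  have hKne : ∀ p, K p ≠ ⊤ := by
    intro p
    by_cases hpq : (p.1 : Fin d → ℝ) = (p.2 : Fin d → ℝ)
    · simp only [hK]; rw [if_pos hpq]; simpa using hφne w0 hw0
    · simp only [hK]; rw [if_neg hpq]; simpa using hφne _ (sub_ne_zero_of_ne hpq)
  have hcov : (⋃ p, (K p : Set (Fin d → ℝ))) ≠ Set.univ := by
    intro hcu
    obtain ⟨i, hi⟩ := Subspace.exists_eq_top_of_iUnion_eq_univ hcu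
    exact hKne i hi
  obtain ⟨a, ha⟩ := (Set.ne_univ_iff_exists_notMem _).mp hcov
  simp only [Set.mem_iUnion, not_exists] at ha
  have hsep : ∀ u ∈ W, ∀ v ∈ W, u ≠ v → (∑ l, a l * u l) ≠ (∑ l, a l * v l) := by
    intro u hu v hv huv heq
    have hka := ha (⟨⟨u, hu⟩, ⟨v, hv⟩⟩ : ↥W × ↥W)
    rw [hK] at hka
    simp only [huv, if_neg] at hka
    have : φ (u - v) a ≠ 0 := by
      intro h0
      exact hka (by simpa [SetLike.mem_coe, LinearMap.mem_ker] using h0)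
    apply this
    rw [hφ]
    have : ∀ l, a l * (u - v) l = a l * u l - a l * v l := fun l => by
      simp [Pi.sub_apply]; ring
    rw [Finset.sum_congr rfl (fun l _ => this l), Finset.sum_sub_distrib, heq, sub_self]
  -- conclude
  refine multiset_map_inj (fun v => ∑ l, a l * v l) _ _ ?_ ?_
  · intro x hx y hy hxy
    obtain ⟨i, _, rfl⟩ := Multiset.mem_map.mp hx
    obtain ⟨j, _, rfl⟩ := Multiset.mem_map.mp hy
    by_contra hne
    exact hsep _ (Finset.mem_union_left _ (Finset.mem_image_of_mem s (Finset.mem_univ i)))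
      _ (Finset.mem_union_right _ (Finset.mem_image_of_mem sh (Finset.mem_univ j))) hne hxy
  · rw [Multiset.map_map, Multiset.map_map]
    exact hproj a
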